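/- arXiv:2604.05232 — 3 statements merged into one kernel-verified Lean document; each statement's English description precedes it below -/
import Mathlib

section
/- (Optimality of greedy fractional solution) Sort items 1..n in non-increasing order of efficiency p_i / w_i (all p_i, w_i > 0, integer availabilities d_i ≥ 0, capacity W ≥ 0). Let b be the break item: the smallest index with Σ_{i=1}^{b} d_i w_i > W, assuming Σ_{i=1}^{b−1} d_i w_i ≤ W. Then the solution x with x_i = d_i for i < b, x_b = (W − Σ_{i<b} d_i w_i)/w_b, and x_i = 0 for i > b is an optimal solution of the fractional bounded knapsack problem: maximize Σ p_i x_i subject to Σ w_i x_i ≤ W and 0 ≤ x_i ≤ d_i with x_i ∈ ℝ. -/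
open Finset in
/-- Optimality of the greedy (break) solution for the fractional bounded knapsack:
take all copies of items before the break item `b`, a fractional amount of `b`
filling the remaining capacity, and nothing afterwards. -/
theorem stmt_8 (n : ℕ) (p w : Fin n → ℝ) (d : Fin n → ℕ) (W : ℝ)
    (hp : ∀ i, 0 < p i) (hw : ∀ i, 0 < w i) (hW : 0 ≤ W)
    (hsorted : ∀ i j : Fin n, i ≤ j → p j / w j ≤ p i / w i)
    (b : Fin n)
    (hb1 : ∑ i ∈ univ.filter (· < b), (d i : ℝ) * w i ≤ W)
    (hb2 : W < ∑ i ∈ univ.filter (· ≤ b), (d i : ℝ) * w i)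
    (x : Fin n → ℝ)
    (hx : x = fun i =>
      if i < b then (d i : ℝ)
      else if i = b then (W - ∑ j ∈ univ.filter (· < b), (d j : ℝ) * w j) / w b
      else 0) :
    ((∀ i, 0 ≤ x i ∧ x i ≤ (d i : ℝ)) ∧ ∑ i, w i * x i ≤ W) ∧
    (∀ y : Fin n → ℝ, (∀ i, 0 ≤ y i ∧ y i ≤ (d i : ℝ)) → ∑ i, w i * y i ≤ W →
      ∑ i, p i * y i ≤ ∑ i, p i * x i) := by
  have hwb := hw b
  set S := ∑ j ∈ univ.filter (· < b), (d j : ℝ) * w j with hS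
  have hxb : x b = (W - S) / w b := by rw [hx]; simp
  have hxlt : ∀ i, i < b → x i = d i := by intro i h; rw [hx]; simp [h]
  have hxgt : ∀ i, b < i → x i = 0 := by intro i h; rw [hx]; simp [h.not_gt, h.ne']
  have hle : ∑ i ∈ univ.filter (· ≤ b), (d i : ℝ) * w i = (d b : ℝ) * w b + S := by
    have hins : univ.filter (· ≤ b) = insert b (univ.filter (· < b)) := by
      ext i; simp [le_iff_lt_or_eq, or_comm]
    rw [hins, Finset.sum_insert (by simp)]
  have hb2' : W < (d b : ℝ) * w b + S := by rw [← hle]; exact hb2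
  -- sum split lemma
  have hsplit : ∀ f : Fin n → ℝ, ∑ i, f i =
      (∑ i ∈ univ.filter (· < b), f i) + (f b + ∑ i ∈ univ.filter (b < ·), f i) := by
    intro f
    rw [← Finset.sum_filter_add_sum_filter_not univ (· < b) f]
    congr 1
    have hins : univ.filter (fun i => ¬ i < b) = insert b (univ.filter (b < ·)) := by
      ext i
      simp only [Finset.mem_filter, Finset.mem_univ, true_and, not_lt,
        Finset.mem_insert]
      constructor
      · intro h
        rcases lt_or_eq_of_le h with h' | h'
        · exact Or.inr h'
        · exact Or.inl h'.symm
      · rintro (rfl | h)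
        · exact le_refl _
        · exact h.le
    rw [hins, Finset.sum_insert (by simp)]
  have hwx : ∑ i, w i * x i = W := by
    rw [hsplit]
    have h1 : ∑ i ∈ univ.filter (· < b), w i * x i = S := by
      rw [hS]
      apply Finset.sum_congr rfl
      intro i hi
      rw [hxlt i (by simpa using hi)]; ring
    have h2 : ∑ i ∈ univ.filter (b < ·), w i * x i = 0 := by
      apply Finset.sum_eq_zero
      intro i hi
      rw [hxgt i (by simpa using hi)]; ring
    rw [h1, h2, hxb]
    field_simp
    ring
  have hfeas : ∀ i, 0 ≤ x i ∧ x i ≤ (d i : ℝ) := by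
    intro i
    rcases lt_trichotomy i b with h | h | h
    · rw [hxlt i h]; exact ⟨Nat.cast_nonneg _, le_refl _⟩
    · subst h
      rw [hxb]
      constructor
      · exact div_nonneg (sub_nonneg.2 hb1) hwb.le
      · rw [div_le_iff₀ hwb]; linarith
    · rw [hxgt i h]; exact ⟨le_refl _, Nat.cast_nonneg _⟩
  refine ⟨⟨hfeas, le_of_eq hwx⟩, ?_⟩
  intro y hy hyW
  set c := p b / w b with hc
  have hc0 : 0 ≤ c := div_nonneg (hp b).le hwb.le
  have key : ∀ i, (p i - c * w i) * (y i - x i) ≤ 0 := by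
    intro i
    rcases lt_trichotomy i b with h | h | h
    · have h1 : 0 ≤ p i - c * w i := by
        have hs := hsorted i b h.le
        have hwi := hw i
        rw [sub_nonneg, hc]
        calc p b / w b * w i ≤ p i / w i * w i :=
              mul_le_mul_of_nonneg_right hs hwi.le
          _ = p i := by field_simp
      have h2 : y i - x i ≤ 0 := by rw [hxlt i h]; linarith [(hy i).2]
      exact mul_nonpos_iff.2 (Or.inl ⟨h1, h2⟩)
    · subst h
      have : p i - c * w i = 0 := by rw [hc]; field_simp; ring
      rw [this, zero_mul]
    · have h1 : p i - c * w i ≤ 0 := by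
        have hs := hsorted b i h.le
        have hwi := hw i
        rw [sub_nonpos, hc]
        calc p i = p i / w i * w i := by field_simp
          _ ≤ p b / w b * w i := mul_le_mul_of_nonneg_right hs hwi.le
      have h2 : 0 ≤ y i - x i := by rw [hxgt i h]; linarith [(hy i).1]
      exact mul_nonpos_iff.2 (Or.inr ⟨h1, h2⟩)
  have hsum : ∑ i, p i * y i - ∑ i, p i * x i =
      ∑ i, (p i - c * w i) * (y i - x i) +
        c * (∑ i, w i * y i - ∑ i, w i * x i) := by
    rw [← Finset.sum_sub_distrib, mul_sub, Finset.mul_sum, Finset.mul_sum,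
      ← Finset.sum_sub_distrib, ← Finset.sum_add_distrib]
    apply Finset.sum_congr rfl
    intro i _
    ring
  have h1 : ∑ i, (p i - c * w i) * (y i - x i) ≤ 0 :=
    Finset.sum_nonpos fun i _ => key i
  have h2 : c * (∑ i, w i * y i - ∑ i, w i * x i) ≤ 0 := by
    apply mul_nonpos_iff.2 (Or.inl ⟨hc0, ?_⟩)
    rw [hwx]; linarith
  linarith
end

section
/- (Validity of the weak upper bound for right items) With items sorted by non-increasing efficiency and break item b, break solution profit p̂ = Σ_{i<b} d_i p_i and weight ŵ = Σ_{i<b} d_i w_i ≤ W: for any right item i ≥ b and integer e ≥ 0, any feasible fractional solution x with x_i ≥ e satisfies Σ p_j x_j ≤ p̂ + e·p_i + (W − ŵ − e·w_i)·(p_b/w_b), provided W − ŵ − e·w_i ≥ 0 and p_i/w_i ≤ p_b/w_b. -/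
open Finset in
/-- Validity of the weak upper bound for right items: any feasible fractional
solution containing at least `e` copies of a right item `i` has value at most
`p̂ + e·p_i + (W − ŵ − e·w_i)·(p_b / w_b)`. -/
theorem stmt_9 (n : ℕ) (p w : Fin n → ℝ) (d : Fin n → ℕ) (W : ℝ)
    (hp : ∀ j, 0 < p j) (hw : ∀ j, 0 < w j)
    (hsorted : ∀ j k : Fin n, j ≤ k → p k / w k ≤ p j / w j)
    (b : Fin n)
    (hbreak : ∑ j ∈ univ.filter (· < b), (d j : ℝ) * w j ≤ W)
    (i : Fin n) (hi : b ≤ i) (e : ℕ)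
    (heff : p i / w i ≤ p b / w b)
    (hres : 0 ≤ W - (∑ j ∈ univ.filter (· < b), (d j : ℝ) * w j) - (e : ℝ) * w i)
    (x : Fin n → ℝ)
    (hxfeas : ∀ j, 0 ≤ x j ∧ x j ≤ (d j : ℝ))
    (hxcap : ∑ j, w j * x j ≤ W)
    (hxi : (e : ℝ) ≤ x i) :
    ∑ j, p j * x j ≤
      (∑ j ∈ univ.filter (· < b), (d j : ℝ) * p j) + (e : ℝ) * p i +
        (W - (∑ j ∈ univ.filter (· < b), (d j : ℝ) * w j) - (e : ℝ) * w i) * (p b / w b) := by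
  set r : ℝ := p b / w b with hr
  have hr0 : 0 ≤ r := div_nonneg (hp b).le (hw b).le
  set a : Fin n → ℝ := fun j => if j < b then (d j : ℝ) * p j else if j = i then (e : ℝ) * p i else 0 with ha
  set c : Fin n → ℝ := fun j => if j < b then (d j : ℝ) * w j else if j = i then (e : ℝ) * w i else 0 with hc
  have hib : ¬ i < b := not_lt.mpr hi
  have hsa : ∑ j, a j = (∑ j ∈ univ.filter (· < b), (d j : ℝ) * p j) + (e : ℝ) * p i := by
    rw [← Finset.sum_filter_add_sum_filter_not univ (· < b) a]
    congr 1
    · exact Finset.sum_congr rfl (fun j hj => by simp at hj; simp [ha, hj])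
    · rw [Finset.sum_congr rfl (g := fun j => if j = i then (e : ℝ) * p i else 0)
        (fun j hj => by simp at hj; simp [ha, hj])]
      rw [Finset.sum_ite_eq' _ i]
      simp [hib]
  have hsc : ∑ j, c j = (∑ j ∈ univ.filter (· < b), (d j : ℝ) * w j) + (e : ℝ) * w i := by
    rw [← Finset.sum_filter_add_sum_filter_not univ (· < b) c]
    congr 1
    · exact Finset.sum_congr rfl (fun j hj => by simp at hj; simp [hc, hj])
    · rw [Finset.sum_congr rfl (g := fun j => if j = i then (e : ℝ) * w i else 0)
        (fun j hj => by simp at hj; simp [hc, hj])]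
      rw [Finset.sum_ite_eq' _ i]
      simp [hib]
  have key : ∀ j, p j * x j ≤ a j + r * (w j * x j - c j) := by
    intro j
    by_cases hjb : j < b
    · have h1 : r ≤ p j / w j := hsorted j b hjb.le
      have h2 : r * w j ≤ p j := by
        rw [le_div_iff₀ (hw j)] at h1; linarith
      have h3 : x j - (d j : ℝ) ≤ 0 := by linarith [(hxfeas j).2]
      have := mul_le_mul_of_nonpos_right h2 h3
      simp only [ha, hc, hjb, if_true]
      nlinarith
    · have hbj : b ≤ j := not_lt.mp hjb
      have h1 : p j / w j ≤ r := hsorted b j hbj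
      have h2 : p j ≤ r * w j := by
        rw [div_le_iff₀ (hw j)] at h1; linarith
      by_cases hji : j = i
      · subst hji
        have h3 : 0 ≤ x j - (e : ℝ) := by linarith
        have h2' : p j ≤ r * w j := by
          rw [hr]; rw [div_le_div_iff₀ (hw j) (hw b)] at heff
          rw [div_mul_eq_mul_div, le_div_iff₀ (hw b)]; linarith
        have := mul_le_mul_of_nonneg_right h2' h3
        simp only [ha, hc, hjb, if_false, if_true]
        nlinarith
      · have h3 : 0 ≤ x j := (hxfeas j).1
        have := mul_le_mul_of_nonneg_right h2 h3
        simp only [ha, hc, hjb, hji, if_false]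
        nlinarith
  calc ∑ j, p j * x j ≤ ∑ j, (a j + r * (w j * x j - c j)) :=
        Finset.sum_le_sum (fun j _ => key j)
    _ = (∑ j, a j) + r * ((∑ j, w j * x j) - ∑ j, c j) := by
        rw [Finset.sum_add_distrib, ← Finset.mul_sum, Finset.sum_sub_distrib]
    _ ≤ (∑ j, a j) + r * (W - ∑ j, c j) := by
        have := mul_le_mul_of_nonneg_left (sub_le_sub_right hxcap (∑ j, c j)) hr0
        linarith
    _ = _ := by rw [hsa, hsc]; ring
end

section
/- (Enhanced divisibility fixing) Suppose every improved solution contains at least |S| − 1 unfixed copies of items in a set S of left items each with exactly one unfixed copy (u_i = 1). Let h ∈ S, and consider the modified instance where the availability of h is reduced by one and, consequently, all unfixed copies of items in S \ {h} are fixed in the solution. If every solution of the modified instance has value strictly smaller than z + 1, then every improved solution of the original instance (value ≥ z + 1) contains all d_h copies of item h; i.e., one can set u_h = 0. -/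
open Finset in
/-- Enhanced divisibility fixing: let `S` be the set of left items with exactly one
unfixed copy. If every improved solution contains at least `|S| − 1` of the unfixed
copies of items of `S`, and every solution of the modified instance (availability of
`h` reduced by one, all unfixed copies of the other items of `S` fixed) has value
`< z + 1`, then every improved solution contains all `d h` copies of `h`. -/
theorem stmt_15 {ι : Type*} [Fintype ι] [DecidableEq ι]
    (p w d u : ι → ℕ) (W z : ℕ) (Ileft : Finset ι)
    (hu : ∀ i, u i ≤ d i)
    (S : Finset ι) (hS : S = Ileft.filter (fun i => u i = 1))
    (h : ι) (hhS : h ∈ S)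
    -- every improved solution contains at least |S| − 1 unfixed copies of items in S
    (hcard : ∀ x : ι → ℕ,
      (∀ i, x i ≤ d i) → (∑ i, w i * x i ≤ W) → (z + 1 ≤ ∑ i, p i * x i) →
      (∀ i ∈ Ileft, d i - u i ≤ x i) →
      S.card - 1 ≤ (S.filter (fun i => x i = d i)).card)
    -- every solution of the modified instance has value < z + 1
    (hmod : ∀ x : ι → ℕ,
      (∀ i, x i ≤ d i) → (∑ i, w i * x i ≤ W) →
      (∀ i ∈ Ileft, d i - u i ≤ x i) →
      x h ≤ d h - 1 → (∀ i ∈ S, i ≠ h → x i = d i) →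
      ∑ i, p i * x i < z + 1) :
    ∀ x : ι → ℕ,
      (∀ i, x i ≤ d i) → (∑ i, w i * x i ≤ W) → (z + 1 ≤ ∑ i, p i * x i) →
      (∀ i ∈ Ileft, d i - u i ≤ x i) →
      x h = d h := by
  intro x hxd hxw hxz hxl
  by_contra hne
  -- the set of items of S at their bound is contained in S \ {h}
  have hsub : S.filter (fun i => x i = d i) ⊆ S.erase h := by
    intro i hi
    simp only [Finset.mem_filter] at hi
    exact Finset.mem_erase.mpr ⟨fun hih => hne (hih ▸ hi.2), hi.1⟩
  have hcard' := hcard x hxd hxw hxz hxl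
  have hScard : (S.erase h).card = S.card - 1 := Finset.card_erase_of_mem hhS
  have heq : S.filter (fun i => x i = d i) = S.erase h :=
    Finset.eq_of_subset_of_card_le hsub (by omega)
  have hall : ∀ i ∈ S, i ≠ h → x i = d i := by
    intro i hi hih
    have : i ∈ S.filter (fun i => x i = d i) := heq ▸ Finset.mem_erase.mpr ⟨hih, hi⟩
    exact (Finset.mem_filter.mp this).2
  have hxh : x h ≤ d h - 1 := by
    have := hxd h
    omega
  exact absurd (hmod x hxd hxw hxl hxh hall) (by omega)
end
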